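/- arXiv:2210.07738 — 3 statements merged into one kernel-verified Lean document; each statement's English description precedes it below -/
import Mathlib

section
/- For every τ : ℕ there is an adjunction ⟨τ⟩ ⊣ [τ] of endofunctors on Psh: the unit η^⊣_{A,τ} : A ⟶ [τ](⟨τ⟩A), given componentwise at stage t by sending a ∈ A(t) to the pair (proof of τ ≤ t + τ, a transported along (t + τ) ∸ τ = t), and the counit ε^⊣_{A,τ} : ⟨τ⟩([τ]A) ⟶ A, given componentwise at stage t by sending (p : τ ≤ t, x ∈ A((t ∸ τ) + τ)) to x transported along (t ∸ τ) + τ = t (valid since τ ≤ t), are natural in A and satisfy the triangle identities ε^⊣_{⟨τ⟩A,τ} ∘ ⟨τ⟩(η^⊣_{A,τ}) = id and [τ](ε^⊣_{A,τ}) ∘ η^⊣_{[τ]A,τ} = id. -/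
/-- The category `Psh` of functors from the preorder `(ℕ, ≤)` to `Type`:
an object consists of sets `obj t` together with restriction maps respecting
reflexivity and transitivity. -/
structure Psh : Type 1 where
  obj : ℕ → Type
  map : ∀ {t t' : ℕ}, t ≤ t' → obj t → obj t'
  map_id : ∀ (t : ℕ) (a : obj t), map (le_refl t) a = a
  map_comp : ∀ {t t' t'' : ℕ} (h : t ≤ t') (h' : t' ≤ t'') (a : obj t),
      map (Nat.le_trans h h') a = map h' (map h a)

/-- Morphisms of presheaves: families of components natural in the stage. -/
structure PshHom (A B : Psh) where
  app : ∀ t, A.obj t → B.obj t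
  naturality : ∀ {t t' : ℕ} (h : t ≤ t') (a : A.obj t),
      app t' (A.map h a) = B.map h (app t a)

/-- Transport of presheaf values along an equality of stages. -/
def Psh.cast (A : Psh) {t t' : ℕ} (h : t = t') : A.obj t → A.obj t' :=
  fun a => _root_.cast (congrArg A.obj h) a

/-- The future modality `[τ]`: `([τ]A)(t) = A(t + τ)`. -/
def fut (τ : ℕ) (A : Psh) : Psh where
  obj t := A.obj (t + τ)
  map h a := A.map (Nat.add_le_add_right h τ) a
  map_id t a := A.map_id (t + τ) a
  map_comp h h' a := A.map_comp (Nat.add_le_add_right h τ) (Nat.add_le_add_right h' τ) a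

/-- The action of `[τ]` on families of components. -/
def futMap (τ : ℕ) {A B : Psh} (f : ∀ t, A.obj t → B.obj t) (t : ℕ) :
    (fut τ A).obj t → (fut τ B).obj t :=
  f (t + τ)

/-- The past modality `⟨τ⟩`: `(⟨τ⟩A)(t) = (τ ≤ t) × A(t ∸ τ)`. -/
def past (τ : ℕ) (A : Psh) : Psh where
  obj t := PLift (τ ≤ t) × A.obj (t - τ)
  map h x := ⟨⟨Nat.le_trans x.1.down h⟩, A.map (Nat.sub_le_sub_right h τ) x.2⟩
  map_id t x := by
    obtain ⟨⟨p⟩, a⟩ := x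
    exact congrArg (fun b => (⟨⟨Nat.le_trans p (le_refl t)⟩, b⟩ : PLift (τ ≤ t) × A.obj (t - τ)))
      (A.map_id (t - τ) a)
  map_comp h h' x := by
    obtain ⟨⟨p⟩, a⟩ := x
    exact congrArg (fun b => (⟨⟨_⟩, b⟩ : PLift (τ ≤ _) × A.obj _))
      (A.map_comp (Nat.sub_le_sub_right h τ) (Nat.sub_le_sub_right h' τ) a)

/-- The action of `⟨τ⟩` on families of components. -/
def pastMap (τ : ℕ) {A B : Psh} (f : ∀ t, A.obj t → B.obj t) (t : ℕ) :
    (past τ A).obj t → (past τ B).obj t :=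
  fun x => ⟨x.1, f (t - τ) x.2⟩

/-- `ε_A : [0]A ≅ A`, given by the identity on `A`-values (via `t + 0 = t`). -/
def epsF (A : Psh) (t : ℕ) : (fut 0 A).obj t → A.obj t :=
  A.cast (Nat.add_zero t)

/-- `δ_{A,τ₁,τ₂} : [τ₁+τ₂]A ≅ [τ₁]([τ₂]A)`, given by the identity on `A`-values
(via `(t + τ₁) + τ₂ = t + (τ₁ + τ₂)`). -/
def deltaF (A : Psh) (τ₁ τ₂ t : ℕ) : (fut (τ₁ + τ₂) A).obj t → (fut τ₁ (fut τ₂ A)).obj t :=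
  A.cast (Nat.add_assoc t τ₁ τ₂).symm

/-- `η_A : A ≅ ⟨0⟩A`, pairing an `A`-value with the proof `0 ≤ t` (via `t ∸ 0 = t`). -/
def etaP (A : Psh) (t : ℕ) : A.obj t → (past 0 A).obj t :=
  fun a => ⟨⟨Nat.zero_le t⟩, A.cast (Nat.sub_zero t).symm a⟩

/-- `μ_{A,τ₁,τ₂} : ⟨τ₁⟩(⟨τ₂⟩A) ≅ ⟨τ₁+τ₂⟩A`, the identity on `A`-values, combining
the proofs `τ₁ ≤ t` and `τ₂ ≤ t ∸ τ₁` into `τ₁ + τ₂ ≤ t` (via `(t ∸ τ₁) ∸ τ₂ = t ∸ (τ₁ + τ₂)`). -/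
def muP (A : Psh) (τ₁ τ₂ t : ℕ) : (past τ₁ (past τ₂ A)).obj t → (past (τ₁ + τ₂) A).obj t :=
  fun x => ⟨⟨by have h1 := x.1.down; have h2 := x.2.1.down; omega⟩,
    A.cast (Nat.sub_sub t τ₁ τ₂) x.2.2⟩

/-- Transport of `[−]`-values along an equality of grades. -/
def fcastGrade (A : Psh) (t : ℕ) {τ τ' : ℕ} (h : τ = τ') : (fut τ A).obj t → (fut τ' A).obj t :=
  fun a => _root_.cast (congrArg (fun σ => (fut σ A).obj t) h) a

/-- Transport of `⟨−⟩`-values along an equality of grades. -/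
def pcastGrade (A : Psh) (t : ℕ) {τ τ' : ℕ} (h : τ = τ') : (past τ A).obj t → (past τ' A).obj t :=
  fun x => _root_.cast (congrArg (fun σ => (past σ A).obj t) h) x

/-- The unit `η^⊣_{A,τ} : A ⟶ [τ](⟨τ⟩A)` of the adjunction `⟨τ⟩ ⊣ [τ]`. -/
def etaAdj (A : Psh) (τ t : ℕ) : A.obj t → (fut τ (past τ A)).obj t :=
  fun a => ⟨⟨Nat.le_add_left τ t⟩, A.cast (by omega : t = t + τ - τ) a⟩

/-- The counit `ε^⊣_{A,τ} : ⟨τ⟩([τ]A) ⟶ A` of the adjunction `⟨τ⟩ ⊣ [τ]`. -/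
def epsAdj (A : Psh) (τ t : ℕ) : (past τ (fut τ A)).obj t → A.obj t :=
  fun x => A.cast (Nat.sub_add_cancel x.1.down) x.2

/-- `[τ ≤ τ']_A : [τ]A ⟶ [τ']A`, given by `A(t + τ ≤ t + τ')`. -/
def futMono {τ τ' : ℕ} (h : τ ≤ τ') (A : Psh) (t : ℕ) : (fut τ A).obj t → (fut τ' A).obj t :=
  A.map (Nat.add_le_add_left h t)

/-- `⟨τ ≤ τ'⟩_A : ⟨τ'⟩A ⟶ ⟨τ⟩A`, weakening the proof and restricting along `t ∸ τ' ≤ t ∸ τ`. -/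
def pastMono {τ τ' : ℕ} (h : τ ≤ τ') (A : Psh) (t : ℕ) : (past τ' A).obj t → (past τ A).obj t :=
  fun x => ⟨⟨Nat.le_trans h x.1.down⟩, A.map (by omega : t - τ' ≤ t - τ) x.2⟩



lemma Psh.cast_map (A : Psh) {t t' s s' : ℕ} (e : t = s) (e' : t' = s')
    (hle : t ≤ t') (hle2 : s ≤ s') (a : A.obj t) :
    A.cast e' (A.map hle a) = A.map hle2 (A.cast e a) := by
  subst e; subst e'; rfl

lemma Psh.cast_cast (A : Psh) {t t' t'' : ℕ} (e : t = t') (e' : t' = t'') (a : A.obj t) :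
    A.cast e' (A.cast e a) = A.cast (e.trans e') a := by
  subst e; subst e'; rfl

lemma Psh.cast_rfl (A : Psh) {t : ℕ} (e : t = t) (a : A.obj t) : A.cast e a = a := rfl

lemma past_cast (τ : ℕ) (A : Psh) {t t' : ℕ} (e : t = t') (x : (past τ A).obj t) :
    (past τ A).cast e x = ⟨⟨e ▸ x.1.down⟩, A.cast (by omega) x.2⟩ := by
  subst e; rfl

lemma fut_cast (τ : ℕ) (A : Psh) {t t' : ℕ} (e : t = t') (x : (fut τ A).obj t) :
    (fut τ A).cast e x = A.cast (by omega) x := by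
  subst e; rfl

lemma Psh.cast_hom {A B : Psh} (f : PshHom A B) {t t' : ℕ} (e : t = t') (a : A.obj t) :
    f.app t' (A.cast e a) = B.cast e (f.app t a) := by
  subst e; rfl

/-- For every `τ : ℕ` there is an adjunction `⟨τ⟩ ⊣ [τ]` of endofunctors on `Psh`:
the unit `η^⊣` and counit `ε^⊣` are natural (in the stage and in `A`) and satisfy
the triangle identities. -/
theorem past_fut_adjunction :
    -- the unit is natural in the stage
    (∀ (A : Psh) (τ : ℕ) {t t' : ℕ} (h : t ≤ t') (a : A.obj t),
        etaAdj A τ t' (A.map h a) = (fut τ (past τ A)).map h (etaAdj A τ t a)) ∧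
    -- the counit is natural in the stage
    (∀ (A : Psh) (τ : ℕ) {t t' : ℕ} (h : t ≤ t') (x : (past τ (fut τ A)).obj t),
        epsAdj A τ t' ((past τ (fut τ A)).map h x) = A.map h (epsAdj A τ t x)) ∧
    -- the unit is natural in A
    (∀ {A B : Psh} (f : PshHom A B) (τ t : ℕ) (a : A.obj t),
        etaAdj B τ t (f.app t a) = futMap τ (pastMap τ f.app) t (etaAdj A τ t a)) ∧
    -- the counit is natural in A
    (∀ {A B : Psh} (f : PshHom A B) (τ t : ℕ) (x : (past τ (fut τ A)).obj t),
        epsAdj B τ t (pastMap τ (futMap τ f.app) t x) = f.app t (epsAdj A τ t x)) ∧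
    -- triangle identity: ε^⊣_{⟨τ⟩A,τ} ∘ ⟨τ⟩(η^⊣_{A,τ}) = id
    (∀ (A : Psh) (τ t : ℕ) (x : (past τ A).obj t),
        epsAdj (past τ A) τ t (pastMap τ (etaAdj A τ) t x) = x) ∧
    -- triangle identity: [τ](ε^⊣_{A,τ}) ∘ η^⊣_{[τ]A,τ} = id
    (∀ (A : Psh) (τ t : ℕ) (a : (fut τ A).obj t),
        futMap τ (epsAdj A τ) t (etaAdj (fut τ A) τ t a) = a) := by
  refine ⟨?_, ?_, ?_, ?_, ?_, ?_⟩
  · intro A τ t t' h a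
    refine Prod.ext (Subsingleton.elim _ _) ?_
    exact A.cast_map (by omega) (by omega) h _ a
  · intro A τ t t' h x
    exact A.cast_map _ _ _ _ x.2
  · intro A B f τ t a
    refine Prod.ext (Subsingleton.elim _ _) ?_
    exact (Psh.cast_hom f (by omega) a).symm
  · intro A B f τ t x
    exact (Psh.cast_hom f (Nat.sub_add_cancel x.1.down) x.2).symm
  · intro A τ t x
    show (past τ A).cast _ _ = x
    refine (past_cast τ A _ _).trans ?_
    refine Prod.ext (Subsingleton.elim _ _) ?_
    exact (A.cast_cast (by omega) (by omega) x.2).trans (A.cast_rfl _ _)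
  · intro A τ t a
    show A.cast (Nat.sub_add_cancel (Nat.le_add_left τ t)) ((fut τ A).cast (by omega) a) = a
    rw [fut_cast τ A (by omega : t = t + τ - τ)]
    exact (A.cast_cast _ _ a).trans (A.cast_rfl _ _)
end

section
/- Given a [−]-enrichment enr for the graded monad T, i.e. a family enr_{A,B,τ} : [τ](A⟹B) ⟶ (T τ A ⟹ T τ B), natural in A and B, satisfying (e1) uncurry(enr_{A,A,τ}) ∘ ((η^[]_{A⟹A,τ} ∘ curry(snd)) × id) = snd : 1 × T τ A → T τ A, (e2) uncurry(enr_{A,C,τ}) ∘ (([τ](comp_{A,B,C}) ∘ m_{B⟹C, A⟹B, τ}) × id) ∘ α⁻¹ = uncurry(enr_{B,C,τ}) ∘ (id × uncurry(enr_{A,B,τ})), (e3) uncurry(enr_{A,B,0}) ∘ (ε⁻¹_{A⟹B} × η^T_A) = η^T_B ∘ ev_{A,B}, and (e4) μ^T_{B,τ₁,τ₂} ∘ T τ₁(uncurry(enr_{A,B,τ₂})) ∘ uncurry(enr_{T τ₂ A, [τ₂](A⟹B) × T τ₂ A, τ₁}) ∘ ([τ₁](curry(id)) × id) = uncurry(enr_{A,B,τ₁+τ₂})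 ∘ (δ⁻¹_{A⟹B,τ₁,τ₂} × μ^T_{A,τ₁,τ₂}), the family str_{A,B,τ} := uncurry(enr_{B,A×B,τ}) ∘ ([τ](curry(id_{A×B})) × id) : [τ]A × T τ B ⟶ T τ (A × B) is natural and satisfies the [−]-strength laws: (s1) str_{A,B,0} ∘ (ε⁻¹_A × η^T_B) = η^T_{A×B}; (s2) T τ (snd) ∘ str_{A,B,τ} = snd; (s3) μ^T_{A×B,τ₁,τ₂} ∘ T τ₁ (str_{A,B,τ₂}) ∘ str_{[τ₂]A, T τ₂ B, τ₁} = str_{A,B,τ₁+τ₂} ∘ (δ⁻¹_{A,τ₁,τ₂} × μ^T_{B,τ₁,τ₂}); (s4) T τ (α_{A,B,C}) ∘ str_{A×B,C,τ} ∘ (m_{A,B,τ} × id) ∘ α⁻¹ = str_{A,B×C,τ} ∘ (id × str_{B,C,τ}) where α is the product associator. -/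
open CategoryTheory

universe v u

/-- A cartesian closed category equipped with a time-graded strong monoidal family
of product-preserving endofunctors `[τ]` (with counit `ε`, comultiplication `δ`, and
monotonicity maps `[τ ≤ τ']`) and a graded monad `(T, η^T, μ^T)` graded by `(ℕ, 0, +)`. -/
structure TemporalSetup (C : Type u) [Category.{v} C] where
  /-- binary products -/
  prod : C → C → C
  fst : ∀ A B : C, prod A B ⟶ A
  snd : ∀ A B : C, prod A B ⟶ B
  lift : ∀ {X A B : C}, (X ⟶ A) → (X ⟶ B) → (X ⟶ prod A B)
  lift_fst : ∀ {X A B : C} (f : X ⟶ A) (g : X ⟶ B), lift f g ≫ fst A B = f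
  lift_snd : ∀ {X A B : C} (f : X ⟶ A) (g : X ⟶ B), lift f g ≫ snd A B = g
  lift_unique : ∀ {X A B : C} (h : X ⟶ prod A B), lift (h ≫ fst A B) (h ≫ snd A B) = h
  /-- terminal object -/
  one : C
  bang : ∀ X : C, X ⟶ one
  bang_unique : ∀ {X : C} (f : X ⟶ one), f = bang X
  /-- exponentials -/
  exp : C → C → C
  curry : ∀ {X A B : C}, (prod X A ⟶ B) → (X ⟶ exp A B)
  uncurry : ∀ {X A B : C}, (X ⟶ exp A B) → (prod X A ⟶ B)
  uncurry_curry : ∀ {X A B : C} (f : prod X A ⟶ B), uncurry (curry f) = f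
  curry_uncurry : ∀ {X A B : C} (g : X ⟶ exp A B), curry (uncurry g) = g
  curry_natural : ∀ {X' X A B : C} (h : X' ⟶ X) (f : prod X A ⟶ B),
      h ≫ curry f = curry (lift (fst X' A ≫ h) (snd X' A) ≫ f)
  /-- the endofunctors `[τ]` -/
  fut : ℕ → C ⥤ C
  /-- `[τ]` preserves binary products: `m` is inverse to the comparison map -/
  m : ∀ (A B : C) (τ : ℕ), prod ((fut τ).obj A) ((fut τ).obj B) ⟶ (fut τ).obj (prod A B)
  m_comparison : ∀ (A B : C) (τ : ℕ),
      m A B τ ≫ lift ((fut τ).map (fst A B)) ((fut τ).map (snd A B)) = 𝟙 _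
  comparison_m : ∀ (A B : C) (τ : ℕ),
      lift ((fut τ).map (fst A B)) ((fut τ).map (snd A B)) ≫ m A B τ = 𝟙 _
  /-- monotonicity maps `[τ ≤ τ']`, functorial in `≤` -/
  futLe : ∀ {τ τ' : ℕ}, τ ≤ τ' → (fut τ ⟶ fut τ')
  futLe_id : ∀ τ : ℕ, futLe (le_refl τ) = 𝟙 (fut τ)
  futLe_comp : ∀ {τ τ' τ'' : ℕ} (h : τ ≤ τ') (h' : τ' ≤ τ''),
      futLe (Nat.le_trans h h') = futLe h ≫ futLe h'
  /-- graded comonad structure on `[−]` -/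
  ε : fut 0 ≅ Functor.id C
  δ : ∀ τ₁ τ₂ : ℕ, fut (τ₁ + τ₂) ≅ fut τ₂ ⋙ fut τ₁
  comonad1 : ∀ (τ : ℕ) (A : C),
      (δ 0 τ).hom.app A ≫ ε.hom.app ((fut τ).obj A) = eqToHom (by rw [Nat.zero_add]; rfl)
  comonad2 : ∀ (τ : ℕ) (A : C),
      (δ τ 0).hom.app A ≫ (fut τ).map (ε.hom.app A) = eqToHom (by rw [Nat.add_zero]; rfl)
  comonad3 : ∀ (τ₁ τ₂ τ₃ : ℕ) (A : C),
      (δ (τ₁ + τ₂) τ₃).hom.app A ≫ (δ τ₁ τ₂).hom.app ((fut τ₃).obj A)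
        = eqToHom (by rw [Nat.add_assoc]) ≫ (δ τ₁ (τ₂ + τ₃)).hom.app A
            ≫ (fut τ₁).map ((δ τ₂ τ₃).hom.app A)
  /-- the graded monad `T` -/
  T : ℕ → C ⥤ C
  ηT : Functor.id C ⟶ T 0
  μT : ∀ τ₁ τ₂ : ℕ, T τ₂ ⋙ T τ₁ ⟶ T (τ₁ + τ₂)
  monad1 : ∀ (τ : ℕ) (A : C),
      ηT.app ((T τ).obj A) ≫ (μT 0 τ).app A = eqToHom (by rw [Nat.zero_add]; rfl)
  monad2 : ∀ (τ : ℕ) (A : C),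
      (T τ).map (ηT.app A) ≫ (μT τ 0).app A = eqToHom (by rw [Nat.add_zero]; rfl)
  monad3 : ∀ (τ₁ τ₂ τ₃ : ℕ) (A : C),
      (μT τ₁ τ₂).app ((T τ₃).obj A) ≫ (μT (τ₁ + τ₂) τ₃).app A
        = (T τ₁).map ((μT τ₂ τ₃).app A) ≫ (μT τ₁ (τ₂ + τ₃)).app A
            ≫ eqToHom (by rw [Nat.add_assoc])

namespace TemporalSetup

variable {C : Type u} [Category.{v} C] (S : TemporalSetup C)

/-- The functorial action of the product on morphisms. -/
def pmap {A A' B B' : C} (f : A ⟶ A') (g : B ⟶ B') : S.prod A B ⟶ S.prod A' B' :=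
  S.lift (S.fst A B ≫ f) (S.snd A B ≫ g)

/-- The product associator `α : (A × B) × X ⟶ A × (B × X)`. -/
def assocHom (A B X : C) : S.prod (S.prod A B) X ⟶ S.prod A (S.prod B X) :=
  S.lift (S.fst (S.prod A B) X ≫ S.fst A B)
    (S.lift (S.fst (S.prod A B) X ≫ S.snd A B) (S.snd (S.prod A B) X))

/-- The inverse associator `α⁻¹ : A × (B × X) ⟶ (A × B) × X`. -/
def assocInv (A B X : C) : S.prod A (S.prod B X) ⟶ S.prod (S.prod A B) X :=
  S.lift (S.lift (S.fst A (S.prod B X)) (S.snd A (S.prod B X) ≫ S.fst B X))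
    (S.snd A (S.prod B X) ≫ S.snd B X)

/-- Evaluation `ev_{A,B} := uncurry(id) : (A ⟹ B) × A ⟶ B`. -/
def ev (A B : C) : S.prod (S.exp A B) A ⟶ B :=
  S.uncurry (𝟙 (S.exp A B))

/-- Internal composition `comp_{A,B,X} : (B ⟹ X) × (A ⟹ B) ⟶ (A ⟹ X)`. -/
def comp (A B X : C) : S.prod (S.exp B X) (S.exp A B) ⟶ S.exp A X :=
  S.curry (S.assocHom (S.exp B X) (S.exp A B) A ≫ S.pmap (𝟙 (S.exp B X)) (S.ev A B) ≫ S.ev B X)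

/-- `η^[]_{X,τ} := [0 ≤ τ]_X ∘ ε⁻¹_X : X ⟶ [τ]X`. -/
def etaFut (X : C) (τ : ℕ) : X ⟶ (S.fut τ).obj X :=
  S.ε.inv.app X ≫ (S.futLe (Nat.zero_le τ)).app X

/-- Covariant action of the exponential `A ⟹ −` on morphisms. -/
def epost (A : C) {B B' : C} (g : B ⟶ B') : S.exp A B ⟶ S.exp A B' :=
  S.curry (S.ev A B ≫ g)

/-- Contravariant action of the exponential `− ⟹ B` on morphisms. -/
def epre {A A' : C} (f : A' ⟶ A) (B : C) : S.exp A B ⟶ S.exp A' B :=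
  S.curry (S.pmap (𝟙 (S.exp A B)) f ≫ S.ev A B)

/-- The `[−]`-enrichment induced by a `[−]`-strength:
`enr_{A,B,τ} := curry(T τ (ev_{A,B}) ∘ str_{A⟹B,A,τ})`. -/
def enrOf
    (str : ∀ (A B : C) (τ : ℕ),
      S.prod ((S.fut τ).obj A) ((S.T τ).obj B) ⟶ (S.T τ).obj (S.prod A B))
    (A B : C) (τ : ℕ) :
    (S.fut τ).obj (S.exp A B) ⟶ S.exp ((S.T τ).obj A) ((S.T τ).obj B) :=
  S.curry (str (S.exp A B) A τ ≫ (S.T τ).map (S.ev A B))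

/-- The `[−]`-strength induced by a `[−]`-enrichment:
`str_{A,B,τ} := uncurry(enr_{B,A×B,τ}) ∘ ([τ](curry(id_{A×B})) × id)`. -/
def strOf
    (enr : ∀ (A B : C) (τ : ℕ),
      (S.fut τ).obj (S.exp A B) ⟶ S.exp ((S.T τ).obj A) ((S.T τ).obj B))
    (A B : C) (τ : ℕ) :
    S.prod ((S.fut τ).obj A) ((S.T τ).obj B) ⟶ (S.T τ).obj (S.prod A B) :=
  S.pmap ((S.fut τ).map (S.curry (𝟙 (S.prod A B)))) (𝟙 ((S.T τ).obj B))
    ≫ S.uncurry (enr B (S.prod A B) τ)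

end TemporalSetup

namespace TemporalSetup

variable {C : Type u} [Category.{v} C] (S : TemporalSetup C)

theorem hom_ext {X A B : C} {f g : X ⟶ S.prod A B}
    (h1 : f ≫ S.fst A B = g ≫ S.fst A B) (h2 : f ≫ S.snd A B = g ≫ S.snd A B) :
    f = g := by
  rw [← S.lift_unique f, ← S.lift_unique g, h1, h2]

theorem comp_lift {W X A B : C} (h : W ⟶ X) (f : X ⟶ A) (g : X ⟶ B) :
    h ≫ S.lift f g = S.lift (h ≫ f) (h ≫ g) := by
  rw [← S.lift_unique (h ≫ S.lift f g), Category.assoc, Category.assoc,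
    S.lift_fst, S.lift_snd]

theorem pmap_fst {A B A' B' : C} (f : A ⟶ A') (g : B ⟶ B') :
    S.pmap f g ≫ S.fst A' B' = S.fst A B ≫ f := S.lift_fst _ _

theorem pmap_snd {A B A' B' : C} (f : A ⟶ A') (g : B ⟶ B') :
    S.pmap f g ≫ S.snd A' B' = S.snd A B ≫ g := S.lift_snd _ _

theorem lift_pmap {X A B A' B' : C} (f : X ⟶ A) (g : X ⟶ B) (h : A ⟶ A') (k : B ⟶ B') :
    S.lift f g ≫ S.pmap h k = S.lift (f ≫ h) (g ≫ k) := by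
  apply S.hom_ext
  · rw [Category.assoc, S.pmap_fst, ← Category.assoc, S.lift_fst, S.lift_fst]
  · rw [Category.assoc, S.pmap_snd, ← Category.assoc, S.lift_snd, S.lift_snd]

theorem pmap_pmap {A B A' B' A'' B'' : C} (f : A ⟶ A') (g : B ⟶ B')
    (h : A' ⟶ A'') (k : B' ⟶ B'') :
    S.pmap f g ≫ S.pmap h k = S.pmap (f ≫ h) (g ≫ k) := by
  apply S.hom_ext
  · rw [Category.assoc, S.pmap_fst, ← Category.assoc, S.pmap_fst, S.pmap_fst,
      Category.assoc]
  · rw [Category.assoc, S.pmap_snd, ← Category.assoc, S.pmap_snd, S.pmap_snd,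
      Category.assoc]

theorem pmap_id {A B : C} : S.pmap (𝟙 A) (𝟙 B) = 𝟙 (S.prod A B) := by
  apply S.hom_ext
  · rw [S.pmap_fst, Category.comp_id, Category.id_comp]
  · rw [S.pmap_snd, Category.comp_id, Category.id_comp]

theorem uncurry_injective {X A B : C} {f g : X ⟶ S.exp A B}
    (h : S.uncurry f = S.uncurry g) : f = g := by
  rw [← S.curry_uncurry f, ← S.curry_uncurry g, h]

theorem uncurry_pre {X' X A B : C} (h : X' ⟶ X) (g : X ⟶ S.exp A B) :
    S.uncurry (h ≫ g) = S.pmap h (𝟙 A) ≫ S.uncurry g := by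
  have h1 : S.pmap h (𝟙 A) = S.lift (S.fst X' A ≫ h) (S.snd X' A) := by
    unfold pmap; rw [Category.comp_id]
  rw [h1]
  conv_lhs => rw [← S.curry_uncurry g]
  rw [S.curry_natural, S.uncurry_curry]

theorem uncurry_ev {X A B : C} (g : X ⟶ S.exp A B) :
    S.pmap g (𝟙 A) ≫ S.ev A B = S.uncurry g := by
  rw [ev, ← S.uncurry_pre, Category.comp_id]

theorem uncurry_epost {X A B B' : C} (g : X ⟶ S.exp A B) (k : B ⟶ B') :
    S.uncurry (g ≫ S.epost A k) = S.uncurry g ≫ k := by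
  rw [epost, S.uncurry_pre, S.uncurry_curry, ← Category.assoc, S.uncurry_ev]

theorem uncurry_epre {X A A' B : C} (g : X ⟶ S.exp A B) (f : A' ⟶ A) :
    S.uncurry (g ≫ S.epre f B) = S.pmap (𝟙 X) f ≫ S.uncurry g := by
  rw [epre, S.uncurry_pre, S.uncurry_curry, ← S.uncurry_ev, ← Category.assoc,
    ← Category.assoc, S.pmap_pmap, S.pmap_pmap, Category.comp_id, Category.id_comp,
    Category.comp_id, Category.id_comp]

theorem comparison_cancel {W A B : C} {τ : ℕ}
    {x y : W ⟶ (S.fut τ).obj (S.prod A B)}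
    (h : x ≫ S.lift ((S.fut τ).map (S.fst A B)) ((S.fut τ).map (S.snd A B))
       = y ≫ S.lift ((S.fut τ).map (S.fst A B)) ((S.fut τ).map (S.snd A B))) :
    x = y := by
  have h2 : x ≫ (S.lift ((S.fut τ).map (S.fst A B)) ((S.fut τ).map (S.snd A B)) ≫ S.m A B τ)
      = y ≫ (S.lift ((S.fut τ).map (S.fst A B)) ((S.fut τ).map (S.snd A B)) ≫ S.m A B τ) := by
    rw [← Category.assoc, h, Category.assoc]
  rwa [S.comparison_m, Category.comp_id, Category.comp_id] at h2

theorem m_fst {A B : C} (τ : ℕ) :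
    S.m A B τ ≫ (S.fut τ).map (S.fst A B) = S.fst _ _ := by
  have := congrArg (· ≫ S.fst ((S.fut τ).obj A) ((S.fut τ).obj B)) (S.m_comparison A B τ)
  simpa [Category.assoc, S.lift_fst] using this

theorem m_snd {A B : C} (τ : ℕ) :
    S.m A B τ ≫ (S.fut τ).map (S.snd A B) = S.snd _ _ := by
  have := congrArg (· ≫ S.snd ((S.fut τ).obj A) ((S.fut τ).obj B)) (S.m_comparison A B τ)
  simpa [Category.assoc, S.lift_snd] using this

theorem m_natural {A B A' B' : C} (f : A ⟶ A') (g : B ⟶ B') (τ : ℕ) :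
    S.pmap ((S.fut τ).map f) ((S.fut τ).map g) ≫ S.m A' B' τ
      = S.m A B τ ≫ (S.fut τ).map (S.pmap f g) := by
  apply S.comparison_cancel
  have hy : (S.fut τ).map (S.pmap f g)
      ≫ S.lift ((S.fut τ).map (S.fst A' B')) ((S.fut τ).map (S.snd A' B'))
      = S.lift ((S.fut τ).map (S.fst A B)) ((S.fut τ).map (S.snd A B))
        ≫ S.pmap ((S.fut τ).map f) ((S.fut τ).map g) := by
    rw [S.comp_lift, ← Functor.map_comp, ← Functor.map_comp, S.pmap_fst, S.pmap_snd,
      Functor.map_comp, Functor.map_comp, ← S.lift_pmap]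
  rw [Category.assoc, Category.assoc, S.m_comparison, Category.comp_id, hy,
    ← Category.assoc, S.m_comparison, Category.id_comp]

theorem fut_one_ext {Z : C} (τ : ℕ) (f g : Z ⟶ (S.fut τ).obj S.one) : f = g := by
  have h0 : S.fst S.one S.one = S.snd S.one S.one := by
    rw [S.bang_unique (S.fst S.one S.one), S.bang_unique (S.snd S.one S.one)]
  have h1 : S.fst ((S.fut τ).obj S.one) ((S.fut τ).obj S.one)
      = S.snd ((S.fut τ).obj S.one) ((S.fut τ).obj S.one) := by
    calc S.fst ((S.fut τ).obj S.one) ((S.fut τ).obj S.one)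
        = (S.m S.one S.one τ ≫ S.lift ((S.fut τ).map (S.fst S.one S.one))
            ((S.fut τ).map (S.snd S.one S.one))) ≫ S.fst _ _ := by
          rw [S.m_comparison, Category.id_comp]
      _ = S.m S.one S.one τ ≫ (S.fut τ).map (S.fst S.one S.one) := by
          rw [Category.assoc, S.lift_fst]
      _ = S.m S.one S.one τ ≫ (S.fut τ).map (S.snd S.one S.one) := by rw [h0]
      _ = (S.m S.one S.one τ ≫ S.lift ((S.fut τ).map (S.fst S.one S.one))
            ((S.fut τ).map (S.snd S.one S.one))) ≫ S.snd _ _ := by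
          rw [Category.assoc, S.lift_snd]
      _ = S.snd ((S.fut τ).obj S.one) ((S.fut τ).obj S.one) := by
          rw [S.m_comparison, Category.id_comp]
  calc f = S.lift f g ≫ S.fst _ _ := (S.lift_fst f g).symm
    _ = S.lift f g ≫ S.snd _ _ := by rw [h1]
    _ = g := S.lift_snd f g

theorem pmap_fuse_l {A A' A'' B : C} (f : A ⟶ A') (g : A' ⟶ A'') :
    S.pmap f (𝟙 B) ≫ S.pmap g (𝟙 B) = S.pmap (f ≫ g) (𝟙 B) := by
  rw [S.pmap_pmap, Category.comp_id]

theorem pmap_fuse_r {A B B' B'' : C} (f : B ⟶ B') (g : B' ⟶ B'') :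
    S.pmap (𝟙 A) f ≫ S.pmap (𝟙 A) g = S.pmap (𝟙 A) (f ≫ g) := by
  rw [S.pmap_pmap, Category.comp_id]

theorem pmap_split_l {A A' B B' : C} (f : A ⟶ A') (g : B ⟶ B') :
    S.pmap f g = S.pmap f (𝟙 B) ≫ S.pmap (𝟙 A') g := by
  rw [S.pmap_pmap, Category.comp_id, Category.id_comp]

theorem pmap_split_r {A A' B B' : C} (f : A ⟶ A') (g : B ⟶ B') :
    S.pmap f g = S.pmap (𝟙 A) g ≫ S.pmap f (𝟙 B') := by
  rw [S.pmap_pmap, Category.comp_id, Category.id_comp]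

theorem name_natural {A A' B B' : C} (f : A ⟶ A') (g : B ⟶ B') :
    f ≫ S.curry (𝟙 (S.prod A' B')) ≫ S.epre g (S.prod A' B')
      = S.curry (𝟙 (S.prod A B)) ≫ S.epost B (S.pmap f g) := by
  apply S.uncurry_injective
  rw [S.uncurry_epost, S.uncurry_curry, Category.id_comp, ← Category.assoc,
    S.uncurry_epre, S.uncurry_pre, S.uncurry_curry, Category.comp_id,
    S.pmap_pmap, Category.id_comp, Category.comp_id]

theorem name_epost_snd {A B : C} :
    S.curry (𝟙 (S.prod A B)) ≫ S.epost B (S.snd A B) = S.curry (S.snd A B) := by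
  apply S.uncurry_injective
  rw [S.uncurry_epost, S.uncurry_curry, S.uncurry_curry, Category.id_comp]

theorem curry_snd_factor {A B : C} :
    S.curry (S.snd A B) = S.bang A ≫ S.curry (S.snd S.one B) := by
  apply S.uncurry_injective
  rw [S.uncurry_pre, S.uncurry_curry, S.uncurry_curry, S.pmap_snd, Category.comp_id]

theorem name_shift {Z W Y : C} (u : Z ⟶ W) :
    S.curry (𝟙 (S.prod Z Y)) ≫ S.epost Y (S.pmap u (𝟙 Y))
      = u ≫ S.curry (𝟙 (S.prod W Y)) := by
  apply S.uncurry_injective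
  rw [S.uncurry_epost, S.uncurry_curry, Category.id_comp, S.uncurry_pre, S.uncurry_curry,
    Category.comp_id]

theorem lift_fst_assoc {X A B Z : C} (f : X ⟶ A) (g : X ⟶ B) (h : A ⟶ Z) :
    S.lift f g ≫ S.fst A B ≫ h = f ≫ h := by
  rw [← Category.assoc, S.lift_fst]

theorem lift_snd_assoc {X A B Z : C} (f : X ⟶ A) (g : X ⟶ B) (h : B ⟶ Z) :
    S.lift f g ≫ S.snd A B ≫ h = g ≫ h := by
  rw [← Category.assoc, S.lift_snd]

theorem assocHom_natural {A B X A' B' X' : C} (f : A ⟶ A') (g : B ⟶ B') (h : X ⟶ X') :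
    S.pmap (S.pmap f g) h ≫ S.assocHom A' B' X'
      = S.assocHom A B X ≫ S.pmap f (S.pmap g h) := by
  apply S.hom_ext
  · simp only [assocHom, pmap, Category.assoc, S.comp_lift, S.lift_fst, S.lift_snd,
      S.lift_fst_assoc, S.lift_snd_assoc]
  · apply S.hom_ext <;>
      simp only [assocHom, pmap, Category.assoc, S.comp_lift, S.lift_fst, S.lift_snd,
        S.lift_fst_assoc, S.lift_snd_assoc]

theorem assocInv_natural {A B X A' B' X' : C} (f : A ⟶ A') (g : B ⟶ B') (h : X ⟶ X') :
    S.pmap f (S.pmap g h) ≫ S.assocInv A' B' X'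
      = S.assocInv A B X ≫ S.pmap (S.pmap f g) h := by
  apply S.hom_ext
  · apply S.hom_ext <;>
      simp only [assocInv, pmap, Category.assoc, S.comp_lift, S.lift_fst, S.lift_snd,
        S.lift_fst_assoc, S.lift_snd_assoc]
  · simp only [assocInv, pmap, Category.assoc, S.comp_lift, S.lift_fst, S.lift_snd,
      S.lift_fst_assoc, S.lift_snd_assoc]

theorem name_comp_assoc {A B X : C} :
    S.pmap (S.curry (𝟙 (S.prod A (S.prod B X)))) (S.curry (𝟙 (S.prod B X)))
        ≫ S.comp X (S.prod B X) (S.prod A (S.prod B X))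
      = S.curry (𝟙 (S.prod (S.prod A B) X)) ≫ S.epost X (S.assocHom A B X) := by
  apply S.uncurry_injective
  rw [S.uncurry_epost, S.uncurry_curry, Category.id_comp, comp, S.uncurry_pre,
    S.uncurry_curry]
  calc S.pmap (S.pmap (S.curry (𝟙 (S.prod A (S.prod B X)))) (S.curry (𝟙 (S.prod B X)))) (𝟙 X)
        ≫ S.assocHom _ _ X ≫ S.pmap (𝟙 _) (S.ev X (S.prod B X)) ≫ S.ev (S.prod B X) _
      = S.assocHom A B X ≫ S.pmap (S.curry (𝟙 (S.prod A (S.prod B X))))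
          (S.pmap (S.curry (𝟙 (S.prod B X))) (𝟙 X))
          ≫ S.pmap (𝟙 _) (S.ev X (S.prod B X)) ≫ S.ev (S.prod B X) _ := by
        rw [← Category.assoc, S.assocHom_natural, Category.assoc]
    _ = S.assocHom A B X ≫ S.pmap (S.curry (𝟙 (S.prod A (S.prod B X))))
          (S.pmap (S.curry (𝟙 (S.prod B X))) (𝟙 X) ≫ S.ev X (S.prod B X))
          ≫ S.ev (S.prod B X) _ := by
        rw [← Category.assoc (S.pmap _ _), S.pmap_pmap, Category.comp_id]
    _ = S.assocHom A B X ≫ S.pmap (S.curry (𝟙 (S.prod A (S.prod B X)))) (𝟙 (S.prod B X))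
          ≫ S.ev (S.prod B X) _ := by rw [S.uncurry_ev, S.uncurry_curry]
    _ = S.assocHom A B X ≫ 𝟙 _ := by rw [S.uncurry_ev, S.uncurry_curry]
    _ = S.assocHom A B X := Category.comp_id _

theorem etaFut_natural {X Y : C} (h : X ⟶ Y) (τ : ℕ) :
    h ≫ S.etaFut Y τ = S.etaFut X τ ≫ (S.fut τ).map h := by
  unfold etaFut
  have h1 := S.ε.inv.naturality h
  simp only [Functor.id_map] at h1
  rw [← Category.assoc, h1, Category.assoc, (S.futLe (Nat.zero_le τ)).naturality h,
    Category.assoc]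

end TemporalSetup


open TemporalSetup in
/-- Given a `[−]`-enrichment `enr` for the graded monad `T` (natural and satisfying
(e1)–(e4)), the induced family `str := uncurry(enr_{B,A×B,τ}) ∘ ([τ](curry(id)) × id)`
is natural and satisfies the `[−]`-strength laws (s1)–(s4). -/
theorem enrichment_to_strength
    {C : Type u} [Category.{v} C] (S : TemporalSetup C)
    (enr : ∀ (A B : C) (τ : ℕ),
      (S.fut τ).obj (S.exp A B) ⟶ S.exp ((S.T τ).obj A) ((S.T τ).obj B))
    (enr_natural_right : ∀ (A : C) {B B' : C} (g : B ⟶ B') (τ : ℕ),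
      (S.fut τ).map (S.epost A g) ≫ enr A B' τ
        = enr A B τ ≫ S.epost ((S.T τ).obj A) ((S.T τ).map g))
    (enr_natural_left : ∀ {A A' : C} (f : A' ⟶ A) (B : C) (τ : ℕ),
      (S.fut τ).map (S.epre f B) ≫ enr A' B τ
        = enr A B τ ≫ S.epre ((S.T τ).map f) ((S.T τ).obj B))
    (e1 : ∀ (A : C) (τ : ℕ),
      S.pmap (S.curry (S.snd S.one A) ≫ S.etaFut (S.exp A A) τ) (𝟙 ((S.T τ).obj A))
          ≫ S.uncurry (enr A A τ)
        = S.snd S.one ((S.T τ).obj A))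
    (e2 : ∀ (A B X : C) (τ : ℕ),
      S.assocInv ((S.fut τ).obj (S.exp B X)) ((S.fut τ).obj (S.exp A B)) ((S.T τ).obj A)
          ≫ S.pmap (S.m (S.exp B X) (S.exp A B) τ ≫ (S.fut τ).map (S.comp A B X))
              (𝟙 ((S.T τ).obj A))
          ≫ S.uncurry (enr A X τ)
        = S.pmap (𝟙 ((S.fut τ).obj (S.exp B X))) (S.uncurry (enr A B τ))
            ≫ S.uncurry (enr B X τ))
    (e3 : ∀ A B : C,
      S.pmap (S.ε.inv.app (S.exp A B)) (S.ηT.app A) ≫ S.uncurry (enr A B 0)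
        = S.ev A B ≫ S.ηT.app B)
    (e4 : ∀ (A B : C) (τ₁ τ₂ : ℕ),
      S.pmap
            ((S.fut τ₁).map
              (S.curry (𝟙 (S.prod ((S.fut τ₂).obj (S.exp A B)) ((S.T τ₂).obj A)))))
            (𝟙 ((S.T τ₁).obj ((S.T τ₂).obj A)))
          ≫ S.uncurry (enr ((S.T τ₂).obj A)
              (S.prod ((S.fut τ₂).obj (S.exp A B)) ((S.T τ₂).obj A)) τ₁)
          ≫ (S.T τ₁).map (S.uncurry (enr A B τ₂))
          ≫ (S.μT τ₁ τ₂).app B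
        = S.pmap ((S.δ τ₁ τ₂).inv.app (S.exp A B)) ((S.μT τ₁ τ₂).app A)
            ≫ S.uncurry (enr A B (τ₁ + τ₂))) :
    -- the induced strength is natural ...
    (∀ {A A' B B' : C} (f : A ⟶ A') (g : B ⟶ B') (τ : ℕ),
      S.pmap ((S.fut τ).map f) ((S.T τ).map g) ≫ S.strOf enr A' B' τ
        = S.strOf enr A B τ ≫ (S.T τ).map (S.pmap f g)) ∧
    -- (s1)
    (∀ A B : C,
      S.pmap (S.ε.inv.app A) (S.ηT.app B) ≫ S.strOf enr A B 0 = S.ηT.app (S.prod A B)) ∧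
    -- (s2)
    (∀ (A B : C) (τ : ℕ),
      S.strOf enr A B τ ≫ (S.T τ).map (S.snd A B)
        = S.snd ((S.fut τ).obj A) ((S.T τ).obj B)) ∧
    -- (s3)
    (∀ (A B : C) (τ₁ τ₂ : ℕ),
      S.strOf enr ((S.fut τ₂).obj A) ((S.T τ₂).obj B) τ₁
          ≫ (S.T τ₁).map (S.strOf enr A B τ₂) ≫ (S.μT τ₁ τ₂).app (S.prod A B)
        = S.pmap ((S.δ τ₁ τ₂).inv.app A) ((S.μT τ₁ τ₂).app B) ≫ S.strOf enr A B (τ₁ + τ₂)) ∧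
    -- (s4)
    (∀ (A B X : C) (τ : ℕ),
      S.assocInv ((S.fut τ).obj A) ((S.fut τ).obj B) ((S.T τ).obj X)
          ≫ S.pmap (S.m A B τ) (𝟙 ((S.T τ).obj X))
          ≫ S.strOf enr (S.prod A B) X τ ≫ (S.T τ).map (S.assocHom A B X)
        = S.pmap (𝟙 ((S.fut τ).obj A)) (S.strOf enr B X τ) ≫ S.strOf enr A (S.prod B X) τ) := by
  have enrR : ∀ (A : C) {B B' : C} (g : B ⟶ B') (τ : ℕ),
      S.pmap ((S.fut τ).map (S.epost A g)) (𝟙 ((S.T τ).obj A)) ≫ S.uncurry (enr A B' τ)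
        = S.uncurry (enr A B τ) ≫ (S.T τ).map g := by
    intro A B B' g τ
    rw [← S.uncurry_pre, enr_natural_right, S.uncurry_epost]
  have enrL : ∀ {A A' : C} (f : A' ⟶ A) (B : C) (τ : ℕ),
      S.pmap ((S.fut τ).map (S.epre f B)) (𝟙 ((S.T τ).obj A')) ≫ S.uncurry (enr A' B τ)
        = S.pmap (𝟙 ((S.fut τ).obj (S.exp A B))) ((S.T τ).map f)
            ≫ S.uncurry (enr A B τ) := by
    intro A A' f B τ
    rw [← S.uncurry_pre, enr_natural_left, S.uncurry_epre]
  refine ⟨?_, ?_, ?_, ?_, ?_⟩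
  · -- naturality
    intro A A' B B' f g τ
    unfold TemporalSetup.strOf
    simp only [Category.assoc]
    slice_lhs 1 1 => rw [S.pmap_split_l]
    slice_lhs 2 3 => rw [S.pmap_pmap, Category.comp_id, Category.id_comp, S.pmap_split_l]
    slice_lhs 3 4 => rw [← enrL]
    slice_lhs 1 3 => rw [S.pmap_fuse_l, S.pmap_fuse_l, ← Functor.map_comp,
      ← Functor.map_comp, S.name_natural, Functor.map_comp, ← S.pmap_fuse_l]
    slice_lhs 2 3 => rw [enrR]
  · -- (s1)
    intro A B
    have hnat : S.ε.inv.app A ≫ (S.fut 0).map (S.curry (𝟙 (S.prod A B)))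
        = S.curry (𝟙 (S.prod A B)) ≫ S.ε.inv.app (S.exp B (S.prod A B)) := by
      have h := S.ε.inv.naturality (S.curry (𝟙 (S.prod A B)))
      simpa using h.symm
    unfold TemporalSetup.strOf
    slice_lhs 1 2 => rw [S.pmap_pmap, Category.comp_id, hnat,
      ← Category.id_comp (S.ηT.app B), ← S.pmap_pmap]
    simp only [Functor.id_obj]
    slice_lhs 2 3 => rw [e3]
    slice_lhs 1 2 => rw [S.uncurry_ev, S.uncurry_curry]
    rw [Category.id_comp]
  · -- (s2)
    intro A B τ
    have hb : (S.fut τ).map (S.bang A) = S.bang ((S.fut τ).obj A) ≫ S.etaFut S.one τ :=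
      S.fut_one_ext τ _ _
    unfold TemporalSetup.strOf
    simp only [Category.assoc]
    slice_lhs 2 3 => rw [← enrR]
    slice_lhs 1 2 => rw [S.pmap_fuse_l, ← Functor.map_comp, S.name_epost_snd,
      S.curry_snd_factor, Functor.map_comp, hb, Category.assoc, ← S.etaFut_natural,
      ← S.pmap_fuse_l]
    slice_lhs 2 3 => rw [e1]
    rw [S.pmap_snd, Category.comp_id]
  · -- (s3)
    intro A B τ₁ τ₂
    have hδ : (S.δ τ₁ τ₂).inv.app A ≫ (S.fut (τ₁ + τ₂)).map (S.curry (𝟙 (S.prod A B)))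
        = (S.fut τ₁).map ((S.fut τ₂).map (S.curry (𝟙 (S.prod A B))))
            ≫ (S.δ τ₁ τ₂).inv.app (S.exp B (S.prod A B)) := by
      have h := (S.δ τ₁ τ₂).inv.naturality (S.curry (𝟙 (S.prod A B)))
      simpa [Functor.comp_map] using h.symm
    unfold TemporalSetup.strOf
    simp only [Functor.map_comp, Category.assoc]
    slice_lhs 2 3 => rw [← enrR]
    slice_lhs 1 2 => rw [S.pmap_fuse_l, ← Functor.map_comp, S.name_shift,
      Functor.map_comp, ← S.pmap_fuse_l]
    simp only [Category.assoc]
    rw [e4]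
    slice_lhs 1 2 => rw [S.pmap_pmap, Category.id_comp, ← hδ]
    slice_rhs 1 2 => rw [S.pmap_pmap, Category.comp_id]
  · -- (s4)
    intro A B X τ
    unfold TemporalSetup.strOf
    simp only [Category.assoc]
    slice_lhs 4 5 => rw [← enrR]
    slice_lhs 3 4 => rw [S.pmap_fuse_l, ← Functor.map_comp, ← S.name_comp_assoc,
      Functor.map_comp, ← S.pmap_fuse_l]
    slice_lhs 2 3 => rw [S.pmap_fuse_l, ← S.m_natural, ← S.pmap_fuse_l]
    slice_lhs 1 2 => rw [← S.assocInv_natural]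
    slice_lhs 3 4 => rw [S.pmap_fuse_l]
    slice_lhs 2 4 => rw [e2]
    slice_lhs 1 1 => rw [S.pmap_split_r]
    slice_lhs 2 3 => rw [S.pmap_pmap, Category.comp_id, Category.id_comp, S.pmap_split_r]
    slice_lhs 1 2 => rw [S.pmap_fuse_r]
    simp only [Category.assoc]
end

section
/- If τ₁ ≤ τ₂, then for every context Γ, Γ ∸ τ₂ ⇝ Γ ∸ τ₁. -/
/-- Temporal typing contexts over a type `Ty` of value types. -/
inductive Ctx (Ty : Type) : Type
  | empty : Ctx Ty
  | var : Ctx Ty → Ty → Ctx Ty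
  | mod : Ctx Ty → ℕ → Ctx Ty

namespace Ctx

variable {Ty : Type}

/-- The time captured by a context. -/
def time : Ctx Ty → ℕ
  | empty => 0
  | var Γ _ => time Γ
  | mod Γ τ => time Γ + τ

/-- `X ∈ Γ`: some variable extension by `X` occurs in `Γ`. -/
inductive Mem : Ty → Ctx Ty → Prop
  | here {Γ : Ctx Ty} {X : Ty} : Mem X (var Γ X)
  | thereVar {Γ : Ctx Ty} {X Y : Ty} : Mem X Γ → Mem X (var Γ Y)
  | thereMod {Γ : Ctx Ty} {X : Ty} {τ : ℕ} : Mem X Γ → Mem X (mod Γ τ)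

/-- The "time travelling" operation `Γ ∸ τ`. -/
def minus : Ctx Ty → ℕ → Ctx Ty
  | Γ, 0 => Γ
  | empty, _ + 1 => empty
  | var Γ _, τ + 1 => minus Γ (τ + 1)
  | mod Γ τ', τ + 1 =>
      if τ + 1 ≤ τ' then mod Γ (τ' - (τ + 1)) else minus Γ ((τ + 1) - τ')

/-- Graded membership `X ∈_τ Γ`: `X` occurs in `Γ` with `τ` worth of modalities to its right. -/
inductive MemG : Ty → ℕ → Ctx Ty → Prop
  | here {Γ : Ctx Ty} {X : Ty} : MemG X 0 (var Γ X)
  | thereVar {Γ : Ctx Ty} {X Y : Ty} {τ : ℕ} : MemG X τ Γ → MemG X τ (var Γ Y)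
  | thereMod {Γ : Ctx Ty} {X : Ty} {τ τ' : ℕ} : MemG X τ Γ → MemG X (τ + τ') (mod Γ τ')

/-- Context concatenation `Γ ++ Γ'`. -/
def append : Ctx Ty → Ctx Ty → Ctx Ty
  | Γ, empty => Γ
  | Γ, var Γ' X => var (append Γ Γ') X
  | Γ, mod Γ' τ => mod (append Γ Γ') τ

end Ctx

/-- The renaming relation `Γ ⇝ Γ'`. -/
inductive Ren {Ty : Type} : Ctx Ty → Ctx Ty → Prop
  | id (Γ : Ctx Ty) : Ren Γ Γ
  | comp {Γ Γ' Γ'' : Ctx Ty} : Ren Γ Γ' → Ren Γ' Γ'' → Ren Γ Γ''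
  | wk {Γ : Ctx Ty} (X : Ty) : Ren Γ (Ctx.var Γ X)
  | var {Γ : Ctx Ty} {X : Ty} : Ctx.Mem X Γ → Ren (Ctx.var Γ X) Γ
  | eta {Γ : Ctx Ty} : Ren (Ctx.mod Γ 0) Γ
  | etaInv {Γ : Ctx Ty} : Ren Γ (Ctx.mod Γ 0)
  | mu {Γ : Ctx Ty} (τ τ' : ℕ) : Ren (Ctx.mod Γ (τ + τ')) (Ctx.mod (Ctx.mod Γ τ) τ')
  | muInv {Γ : Ctx Ty} (τ τ' : ℕ) : Ren (Ctx.mod (Ctx.mod Γ τ) τ') (Ctx.mod Γ (τ + τ'))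
  | mon {Γ : Ctx Ty} {τ τ' : ℕ} : τ ≤ τ' → Ren (Ctx.mod Γ τ) (Ctx.mod Γ τ')
  | congVar {Γ Γ' : Ctx Ty} (X : Ty) : Ren Γ Γ' → Ren (Ctx.var Γ X) (Ctx.var Γ' X)
  | congMod {Γ Γ' : Ctx Ty} (τ : ℕ) : Ren Γ Γ' → Ren (Ctx.mod Γ τ) (Ctx.mod Γ' τ)

lemma ren_minus {Ty : Type} (Γ : Ctx Ty) (τ : ℕ) : Ren (Ctx.minus Γ τ) Γ := by
  induction Γ generalizing τ with
  | empty => cases τ <;> exact Ren.id _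
  | var Γ X ih =>
      cases τ with
      | zero => exact Ren.id _
      | succ n => exact Ren.comp (ih (n+1)) (Ren.wk X)
  | mod Γ τ' ih =>
      cases τ with
      | zero => exact Ren.id _
      | succ n =>
          simp only [Ctx.minus]
          split
          · exact Ren.mon (by omega)
          · exact Ren.comp (Ren.comp (ih _) Ren.etaInv) (Ren.mon (Nat.zero_le _))

theorem minus_antitone_ren {Ty : Type} {τ₁ τ₂ : ℕ} (h : τ₁ ≤ τ₂) (Γ : Ctx Ty) :
    Ren (Ctx.minus Γ τ₂) (Ctx.minus Γ τ₁) := by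
  induction Γ generalizing τ₁ τ₂ with
  | empty => cases τ₁ <;> cases τ₂ <;> exact Ren.id _
  | var Γ X ih =>
      cases τ₁ with
      | zero =>
          cases τ₂ with
          | zero => exact Ren.id _
          | succ n => exact Ren.comp (ren_minus _ _) (Ren.id _)
      | succ m =>
          cases τ₂ with
          | zero => omega
          | succ n => exact ih h
  | mod Γ τ' ih =>
      cases τ₂ with
      | zero => cases Nat.le_zero.mp h; exact Ren.id _
      | succ n =>
          cases τ₁ with
          | zero =>
              show Ren (Ctx.minus (Ctx.mod Γ τ') (n+1)) (Ctx.mod Γ τ')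
              simp only [Ctx.minus]
              split
              · exact Ren.mon (by omega)
              · exact Ren.comp (Ren.comp (ren_minus _ _) Ren.etaInv) (Ren.mon (Nat.zero_le _))
          | succ m =>
              simp only [Ctx.minus]
              split
              · split
                · exact Ren.mon (by omega)
                · omega
              · split
                · -- τ' < n+1, m+1 ≤ τ' : LHS = minus Γ (n+1-τ'), RHS = mod Γ (τ'-(m+1))
                  exact Ren.comp (Ren.comp (ren_minus _ _) Ren.etaInv) (Ren.mon (Nat.zero_le _))
                · exact ih (by omega)
end
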